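/- arXiv:1202.3841 — 3 statements merged into one kernel-verified Lean document; each statement's English description precedes it below -/
import Mathlib

section
/- Let (S,P) be a Γ-contraction on a complex Hilbert space H, let a ∈ ℂ with |a| < 1 and β ∈ ℂ with |β| = 1, and suppose that the operator A := I − conj(a)·S + conj(a)²·P is invertible in B(H). Define S_τ = β((1+|a|²)S − 2·conj(a)·P − 2a·I)A⁻¹ and P_τ = β²(P − aS + a²·I)A⁻¹. Then S_τ and P_τ commute and the pair (S_τ, P_τ) is a Γ-contraction. -/
/-!
On `Γ` the operator `A` has the symbol `(1 - ā z₁)(1 - ā z₂)`, whose inverse is the series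
`∑ āᵏ hₖ(z₁, z₂)` of complete homogeneous symmetric polynomials; since `|hₖ| ≤ k + 1` on the
closed bidisc, its partial sums converge uniformly on `Γ`, and, `Γ` being a spectral set for
`(S, P)`, their values at `(S, P)` converge in norm to `A⁻¹`. So `(S_τ, P_τ)` is the norm limit
of polynomial pairs `τ_N(S, P)`, where the polynomial maps `τ_N` are, on `Γ`, uniformly within
`O(N |a|ᴺ)` of the automorphism `τ` of `Γ`. For a polynomial `q`, continuity of `q` near
the compact set `Γ` gives `sup_Γ |q ∘ τ_N| ≤ sup_Γ |q| + ε` for large `N`, and the spectral-set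
inequality for `(S, P)` applied to `q ∘ τ_N` passes to the limit.
-/

open ContinuousLinearMap Filter ComplexConjugate

variable {H : Type*} [NormedAddCommGroup H] [InnerProductSpace ℂ H] [CompleteSpace H]
variable {H₁ : Type*} [NormedAddCommGroup H₁] [InnerProductSpace ℂ H₁] [CompleteSpace H₁]

/-- The defect operator `D_P = (I - P*P)^{1/2}` of a contraction `P`. -/
noncomputable def defectOp (P : H →L[ℂ] H) : H →L[ℂ] H :=
  CFC.sqrt (1 - adjoint P * P)

/-- The defect space `𝒟_P`, the closure of the range of `D_P`. -/
noncomputable def defectSpace (P : H →L[ℂ] H) : Submodule ℂ H :=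
  (LinearMap.range (defectOp P : H →ₗ[ℂ] H)).topologicalClosure

/-- The orthogonal projection of `H` onto the defect space `𝒟_P`, as an operator on `H`. -/
noncomputable def defectProj (P : H →L[ℂ] H) : H →L[ℂ] H :=
  haveI : CompleteSpace (defectSpace P) :=
    (Submodule.isClosed_topologicalClosure _).completeSpace_coe
  (defectSpace P).subtypeL ∘L ((defectSpace P).orthogonalProjectionOnto)

/-- The closed symmetrized bidisc `Γ ⊆ ℂ²`. -/
def gammaSet : Set (ℂ × ℂ) :=
  {w | ∃ z1 z2 : ℂ, ‖z1‖ ≤ 1 ∧ ‖z2‖ ≤ 1 ∧ w = (z1 + z2, z1 * z2)}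

/-- Evaluation `q(S,P)` of a two-variable polynomial on a commuting pair of operators. -/
noncomputable def evalOp (S P : H →L[ℂ] H) (q : MvPolynomial (Fin 2) ℂ) : H →L[ℂ] H :=
  (AddMonoidAlgebra.coeff q).sum fun m c => c • (S ^ (m 0) * P ^ (m 1))

/-- `(S,P)` is a `Γ`-contraction: a commuting pair for which `Γ` is a spectral set. -/
def IsGammaContraction (S P : H →L[ℂ] H) : Prop :=
  Commute S P ∧ ∀ q : MvPolynomial (Fin 2) ℂ,
    ‖evalOp S P q‖ ≤ sSup ((fun w : ℂ × ℂ => ‖MvPolynomial.eval ![w.1, w.2] q‖) '' gammaSet)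

/-- The operator `A = I - conj(a)·S + conj(a)²·P`. -/
noncomputable def Aop (S P : H →L[ℂ] H) (a : ℂ) : H →L[ℂ] H :=
  1 - (conj a) • S + ((conj a) ^ 2) • P

/-- `S_τ = β((1+|a|²)S - 2 conj(a) P - 2a I) A⁻¹`. -/
noncomputable def Stau (S P : H →L[ℂ] H) (a β : ℂ) : H →L[ℂ] H :=
  β • (((1 + ‖a‖ ^ 2 : ℝ) : ℂ) • S - (2 * conj a) • P - (2 * a) • 1) * Ring.inverse (Aop S P a)

/-- `P_τ = β²(P - aS + a² I) A⁻¹`. -/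
noncomputable def Ptau (S P : H →L[ℂ] H) (a β : ℂ) : H →L[ℂ] H :=
  β ^ 2 • (P - a • S + a ^ 2 • 1) * Ring.inverse (Aop S P a)

/-- The Hilbert space `ℓ²(ℕ, H)` of square-summable `H`-valued sequences. -/
noncomputable abbrev ell2 (H : Type*) [NormedAddCommGroup H] [InnerProductSpace ℂ H] :=
  lp (fun _ : ℕ => H) 2

/-- The characteristic function `Θ_P(z) = -P + z D_{P*}(I - zP*)⁻¹ D_P`. -/
noncomputable def charFn (P : H →L[ℂ] H) (z : ℂ) : H →L[ℂ] H :=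
  -P + z • (defectOp (adjoint P) * Ring.inverse (1 - z • adjoint P) * defectOp P)

open MvPolynomial Metric Topology

theorem isCompact_gammaSet : IsCompact gammaSet := by
  have h : gammaSet = (fun z : ℂ × ℂ => (z.1 + z.2, z.1 * z.2)) ''
      (closedBall (0 : ℂ) 1 ×ˢ closedBall (0 : ℂ) 1) := by
    ext w
    simp only [gammaSet, Set.mem_ofPred_eq, Set.mem_image, Set.mem_prod, mem_closedBall_zero_iff,
      Prod.exists]
    constructor
    · rintro ⟨z₁, z₂, h₁, h₂, rfl⟩; exact ⟨z₁, z₂, ⟨h₁, h₂⟩, rfl⟩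
    · rintro ⟨z₁, z₂, ⟨h₁, h₂⟩, rfl⟩; exact ⟨z₁, z₂, h₁, h₂, rfl⟩
  rw [h]
  exact ((isCompact_closedBall 0 1).prod (isCompact_closedBall 0 1)).image (by fun_prop)

noncomputable def gammaSupNorm (q : MvPolynomial (Fin 2) ℂ) : ℝ :=
  sSup ((fun w : ℂ × ℂ => ‖eval ![w.1, w.2] q‖) '' gammaSet)

theorem continuous_eval_pair (q : MvPolynomial (Fin 2) ℂ) :
    Continuous fun w : ℂ × ℂ => eval ![w.1, w.2] q :=
  (continuous_eval q).comp (continuous_pi fun i => by fin_cases i <;> simpa using by fun_prop)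

theorem norm_eval_le_gammaSupNorm (q : MvPolynomial (Fin 2) ℂ) {w : ℂ × ℂ} (hw : w ∈ gammaSet) :
    ‖eval ![w.1, w.2] q‖ ≤ gammaSupNorm q :=
  le_csSup (isCompact_gammaSet.bddAbove_image (continuous_eval_pair q).norm.continuousOn)
    ⟨w, hw, rfl⟩

theorem gammaSupNorm_le {q : MvPolynomial (Fin 2) ℂ} {b : ℝ}
    (h : ∀ z₁ z₂ : ℂ, ‖z₁‖ ≤ 1 → ‖z₂‖ ≤ 1 → ‖eval ![z₁ + z₂, z₁ * z₂] q‖ ≤ b) :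
    gammaSupNorm q ≤ b := by
  refine csSup_le (Set.Nonempty.image _ ⟨(0, 0), 0, 0, by simp⟩) ?_
  rintro _ ⟨_, ⟨z₁, z₂, h₁, h₂, rfl⟩, rfl⟩
  exact h z₁ z₂ h₁ h₂

/-- The complete homogeneous symmetric polynomial `hₖ(z₁, z₂) = ∑ᵢ z₁ⁱ z₂ᵏ⁻ⁱ`, written in
`s = z₁ + z₂` (`X 0`) and `p = z₁ z₂` (`X 1`) through `hₖ₊₂ = s hₖ₊₁ - p hₖ`. -/
noncomputable def symHomog : ℕ → MvPolynomial (Fin 2) ℂ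
  | 0 => 1
  | 1 => X 0
  | n + 2 => X 0 * symHomog (n + 1) - X 1 * symHomog n

theorem eval_symHomog_succ (z₁ z₂ : ℂ) (k : ℕ) :
    eval ![z₁ + z₂, z₁ * z₂] (symHomog (k + 1)) =
      z₁ * eval ![z₁ + z₂, z₁ * z₂] (symHomog k) + z₂ ^ (k + 1) := by
  induction k with
  | zero => simp [symHomog]
  | succ k ih =>
    rw [symHomog]
    simp only [map_sub, map_mul, eval_X, Matrix.cons_val_zero, Matrix.cons_val_one, ih]
    ring

theorem norm_eval_symHomog_le {z₁ z₂ : ℂ} (h₁ : ‖z₁‖ ≤ 1) (h₂ : ‖z₂‖ ≤ 1) (k : ℕ) :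
    ‖eval ![z₁ + z₂, z₁ * z₂] (symHomog k)‖ ≤ k + 1 := by
  induction k with
  | zero => simp [symHomog]
  | succ k ih =>
    rw [eval_symHomog_succ]
    calc _ ≤ ‖z₁‖ * ‖eval ![z₁ + z₂, z₁ * z₂] (symHomog k)‖ + ‖z₂‖ ^ (k + 1) := by
          rw [← norm_mul, ← norm_pow]; exact norm_add_le _ _
      _ ≤ 1 * (k + 1) + 1 := by gcongr; exact pow_le_one₀ (norm_nonneg _) h₂
      _ = (k + 1 : ℕ) + 1 := by push_cast; ring

noncomputable def denomPoly (c : ℂ) : MvPolynomial (Fin 2) ℂ :=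
  1 - C c * X 0 + C c ^ 2 * X 1

noncomputable def neumannPoly (c : ℂ) (N : ℕ) : MvPolynomial (Fin 2) ℂ :=
  ∑ k ∈ Finset.range (N + 1), C c ^ k * symHomog k

noncomputable def neumannRem (c : ℂ) (N : ℕ) : MvPolynomial (Fin 2) ℂ :=
  C c ^ (N + 1) * symHomog (N + 1) - C c ^ (N + 2) * X 1 * symHomog N

theorem denomPoly_mul_neumannPoly (c : ℂ) (N : ℕ) :
    denomPoly c * neumannPoly c N = 1 - neumannRem c N := by
  induction N with
  | zero => simp [denomPoly, neumannPoly, neumannRem, symHomog]; ring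
  | succ N ih =>
    rw [neumannPoly, Finset.sum_range_succ, mul_add, ← neumannPoly, ih, neumannRem, neumannRem,
      symHomog, denomPoly]
    ring

noncomputable def neumannBound (r : ℝ) (N : ℕ) : ℝ := 2 * (N + 2) * r ^ (N + 1)

theorem tendsto_neumannBound {r : ℝ} (h₀ : 0 ≤ r) (h₁ : r < 1) :
    Tendsto (neumannBound r) atTop (𝓝 0) := by
  have h := ((tendsto_self_mul_const_pow_of_lt_one h₀ h₁).add
    (tendsto_pow_atTop_nhds_zero_of_lt_one h₀ h₁)).comp (tendsto_add_atTop_nat 1)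
  have h' : Tendsto (fun N : ℕ => 2 * (((N : ℝ) + 1) * r ^ (N + 1) + r ^ (N + 1))) atTop (𝓝 0) := by
    simpa using h.const_mul 2
  exact h'.congr fun N => by rw [neumannBound]; ring

theorem norm_eval_neumannRem_le {c z₁ z₂ : ℂ} (hc : ‖c‖ ≤ 1) (h₁ : ‖z₁‖ ≤ 1) (h₂ : ‖z₂‖ ≤ 1)
    (N : ℕ) : ‖eval ![z₁ + z₂, z₁ * z₂] (neumannRem c N)‖ ≤ neumannBound ‖c‖ N := by
  have hN := norm_eval_symHomog_le h₁ h₂ N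
  have hN₁ := norm_eval_symHomog_le h₁ h₂ (N + 1)
  have hp : ‖z₁ * z₂‖ ≤ 1 := by rw [norm_mul]; exact mul_le_one₀ h₁ (norm_nonneg _) h₂
  simp only [neumannRem, map_sub, map_mul, map_pow, eval_C, eval_X, Matrix.cons_val_one,
    Matrix.cons_val_zero]
  refine (norm_sub_le _ _).trans ?_
  rw [norm_mul, norm_mul, norm_mul, norm_pow, norm_pow]
  push_cast at hN₁
  have hc' : ‖c‖ ^ (N + 2) ≤ ‖c‖ ^ (N + 1) := pow_le_pow_of_le_one (norm_nonneg _) hc (by omega)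
  calc _ ≤ ‖c‖ ^ (N + 1) * (N + 2) + ‖c‖ ^ (N + 1) * 1 * (N + 2) := by
        gcongr
        · linarith
        · linarith
    _ = neumannBound ‖c‖ N := by rw [neumannBound]; ring

noncomputable def mobius (a β z : ℂ) : ℂ := β * (z - a) / (1 - conj a * z)

theorem one_sub_conj_mul_ne_zero {a z : ℂ} (ha : ‖a‖ < 1) (hz : ‖z‖ ≤ 1) :
    1 - conj a * z ≠ 0 := by
  rw [sub_ne_zero]
  intro h
  have : ‖conj a * z‖ < 1 := by
    rw [norm_mul, RCLike.norm_conj]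
    exact (mul_le_of_le_one_right (norm_nonneg _) hz).trans_lt ha
  rw [← h, norm_one] at this
  exact this.false

theorem norm_mobius_le_one {a β z : ℂ} (ha : ‖a‖ < 1) (hβ : ‖β‖ = 1) (hz : ‖z‖ ≤ 1) :
    ‖mobius a β z‖ ≤ 1 := by
  rw [mobius, norm_div, norm_mul, hβ, one_mul]
  refine div_le_one_of_le₀ ?_ (norm_nonneg _)
  have key : ‖1 - conj a * z‖ ^ 2 - ‖z - a‖ ^ 2 = (1 - ‖a‖ ^ 2) * (1 - ‖z‖ ^ 2) := by
    simp only [Complex.sq_norm, Complex.normSq_apply, Complex.sub_re, Complex.sub_im,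
      Complex.mul_re, Complex.mul_im, Complex.one_re, Complex.one_im, Complex.conj_re,
      Complex.conj_im]
    ring
  have hnonneg : 0 ≤ (1 - ‖a‖ ^ 2) * (1 - ‖z‖ ^ 2) :=
    mul_nonneg (sub_nonneg.2 (pow_le_one₀ (norm_nonneg _) ha.le))
      (sub_nonneg.2 (pow_le_one₀ (norm_nonneg _) hz))
  exact (sq_le_sq₀ (norm_nonneg _) (norm_nonneg _)).1 (by linarith)

noncomputable def sTauNum (a β : ℂ) : MvPolynomial (Fin 2) ℂ :=
  C β * (C ((1 + ‖a‖ ^ 2 : ℝ) : ℂ) * X 0 - C (2 * conj a) * X 1 - C (2 * a))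

noncomputable def pTauNum (a β : ℂ) : MvPolynomial (Fin 2) ℂ :=
  C (β ^ 2) * (X 1 - C a * X 0 + C (a ^ 2))

theorem eval_denomPoly (c z₁ z₂ : ℂ) :
    eval ![z₁ + z₂, z₁ * z₂] (denomPoly c) = (1 - c * z₁) * (1 - c * z₂) := by
  simp only [denomPoly, map_add, map_sub, map_mul, map_pow, map_one, eval_C, eval_X,
    Matrix.cons_val_zero, Matrix.cons_val_one]
  ring

theorem eval_sTauNum {a z₁ z₂ : ℂ} (β : ℂ) (h₁ : 1 - conj a * z₁ ≠ 0) (h₂ : 1 - conj a * z₂ ≠ 0) :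
    eval ![z₁ + z₂, z₁ * z₂] (sTauNum a β) =
      (mobius a β z₁ + mobius a β z₂) * eval ![z₁ + z₂, z₁ * z₂] (denomPoly (conj a)) := by
  have ha : ((‖a‖ ^ 2 : ℝ) : ℂ) = a * conj a := by rw [Complex.mul_conj, Complex.normSq_eq_norm_sq]
  simp only [sTauNum, eval_denomPoly, map_sub, map_mul, eval_C, eval_X, Matrix.cons_val_zero,
    Matrix.cons_val_one, mobius, Complex.ofReal_add, Complex.ofReal_one, ha]
  field_simp
  ring

theorem eval_pTauNum {a z₁ z₂ : ℂ} (β : ℂ) (h₁ : 1 - conj a * z₁ ≠ 0) (h₂ : 1 - conj a * z₂ ≠ 0) :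
    eval ![z₁ + z₂, z₁ * z₂] (pTauNum a β) =
      mobius a β z₁ * mobius a β z₂ * eval ![z₁ + z₂, z₁ * z₂] (denomPoly (conj a)) := by
  simp only [pTauNum, eval_denomPoly, map_add, map_sub, map_mul, eval_C, eval_X,
    Matrix.cons_val_zero, Matrix.cons_val_one]
  rw [mobius, mobius, div_mul_div_comm, div_mul_cancel₀ _ (mul_ne_zero h₁ h₂)]
  ring

theorem exists_mem_gammaSet_dist_le {a β z₁ z₂ : ℂ} (ha : ‖a‖ < 1) (hβ : ‖β‖ = 1)
    (h₁ : ‖z₁‖ ≤ 1) (h₂ : ‖z₂‖ ≤ 1) (N : ℕ) :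
    ∃ t ∈ gammaSet, dist (eval ![z₁ + z₂, z₁ * z₂] (sTauNum a β * neumannPoly (conj a) N),
      eval ![z₁ + z₂, z₁ * z₂] (pTauNum a β * neumannPoly (conj a) N)) t ≤
        2 * neumannBound ‖a‖ N := by
  set m₁ := mobius a β z₁
  set m₂ := mobius a β z₂
  have hm₁ : ‖m₁‖ ≤ 1 := norm_mobius_le_one ha hβ h₁
  have hm₂ : ‖m₂‖ ≤ 1 := norm_mobius_le_one ha hβ h₂
  have hd₁ := one_sub_conj_mul_ne_zero ha h₁
  have hd₂ := one_sub_conj_mul_ne_zero ha h₂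
  set e := eval ![z₁ + z₂, z₁ * z₂] (neumannRem (conj a) N)
  have he : ‖e‖ ≤ neumannBound ‖a‖ N := by
    simpa only [Complex.norm_conj] using
      norm_eval_neumannRem_le ((Complex.norm_conj a).trans_le ha.le) h₁ h₂ N
  have hinv : eval ![z₁ + z₂, z₁ * z₂] (denomPoly (conj a) * neumannPoly (conj a) N) = 1 - e := by
    rw [denomPoly_mul_neumannPoly, map_sub, map_one]
  refine ⟨(m₁ + m₂, m₁ * m₂), ⟨m₁, m₂, hm₁, hm₂, rfl⟩, ?_⟩
  rw [map_mul, eval_sTauNum β hd₁ hd₂, mul_assoc, ← map_mul, hinv, map_mul, eval_pTauNum β hd₁ hd₂,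
    mul_assoc, ← map_mul, hinv, Prod.dist_eq, dist_eq_norm, dist_eq_norm, mul_one_sub, mul_one_sub,
    sub_sub_cancel_left, sub_sub_cancel_left, norm_neg, norm_neg, norm_mul, norm_mul]
  have hs : ‖m₁ + m₂‖ ≤ 2 := (norm_add_le _ _).trans (by linarith)
  have hp : ‖m₁ * m₂‖ ≤ 1 := by rw [norm_mul]; exact mul_le_one₀ hm₁ (norm_nonneg _) hm₂
  have hb := (norm_nonneg e).trans he
  exact max_le (mul_le_mul hs he (norm_nonneg _) zero_le_two)
    ((mul_le_mul hp he (norm_nonneg _) zero_le_one).trans (by linarith))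

theorem IsCompact.exists_pos_forall_norm_lt {X E : Type*} [PseudoMetricSpace X]
    [SeminormedAddCommGroup E] {K : Set X} (hK : IsCompact K) {F : X → E} (hF : Continuous F)
    {M ε : ℝ} (hM : ∀ t ∈ K, ‖F t‖ ≤ M) (hε : 0 < ε) :
    ∃ δ > 0, ∀ x, ∀ t ∈ K, dist x t < δ → ‖F x‖ < M + ε := by
  obtain ⟨δ, hδ, hsub⟩ := hK.exists_thickening_subset_open
    (isOpen_lt hF.norm continuous_const) fun t ht => (hM t ht).trans_lt (lt_add_of_pos_right M hε)
  exact ⟨δ, hδ, fun x t ht hxt => hsub (mem_thickening_iff.2 ⟨t, ht, hxt⟩)⟩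

theorem eval_bind₁_pair (x : Fin 2 → ℂ) (p₁ p₂ q : MvPolynomial (Fin 2) ℂ) :
    eval x (bind₁ ![p₁, p₂] q) = eval ![eval x p₁, eval x p₂] q := by
  have h : (fun i => eval x (![p₁, p₂] i)) = ![eval x p₁, eval x p₂] := by
    funext i
    fin_cases i <;> rfl
  rw [← h]
  exact aeval_bind₁ x ![p₁, p₂] q

theorem eventually_gammaSupNorm_bind₁_le (q : MvPolynomial (Fin 2) ℂ) {a β : ℂ} (ha : ‖a‖ < 1)
    (hβ : ‖β‖ = 1) {ε : ℝ} (hε : 0 < ε) :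
    ∀ᶠ N in atTop, gammaSupNorm (bind₁ ![sTauNum a β * neumannPoly (conj a) N,
      pTauNum a β * neumannPoly (conj a) N] q) ≤ gammaSupNorm q + ε := by
  obtain ⟨δ, hδ, hF⟩ := isCompact_gammaSet.exists_pos_forall_norm_lt (continuous_eval_pair q)
    (fun t ht => norm_eval_le_gammaSupNorm q ht) hε
  filter_upwards [((tendsto_neumannBound (norm_nonneg a) ha).const_mul 2).eventually_lt_const
    (by simpa using hδ)] with N hN
  refine gammaSupNorm_le fun z₁ z₂ h₁ h₂ => ?_
  obtain ⟨t, ht, hdist⟩ := exists_mem_gammaSet_dist_le ha hβ h₁ h₂ N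
  rw [eval_bind₁_pair]
  exact (hF _ t ht (hdist.trans_lt hN)).le

theorem Commute.of_tendsto {R : Type*} [Mul R] [TopologicalSpace R] [ContinuousMul R] [T2Space R]
    {x y : R} {xₙ yₙ : ℕ → R} (hx : Tendsto xₙ atTop (𝓝 x)) (hy : Tendsto yₙ atTop (𝓝 y))
    (h : ∀ n, Commute (xₙ n) (yₙ n)) : Commute x y :=
  tendsto_nhds_unique (hx.mul hy) ((hy.mul hx).congr fun n => (h n).eq.symm)

section

variable {E : Type*} [NormedAddCommGroup E] [InnerProductSpace ℂ E]

theorem evalOp_eq_sum (u v : E →L[ℂ] E) (q : MvPolynomial (Fin 2) ℂ) :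
    evalOp u v q = ∑ m ∈ q.support, q.coeff m • (u ^ m 0 * v ^ m 1) :=
  rfl

theorem evalOp_monomial (u v : E →L[ℂ] E) (m : Fin 2 →₀ ℕ) (c : ℂ) :
    evalOp u v (monomial m c) = c • (u ^ m 0 * v ^ m 1) :=
  sum_monomial_eq (zero_smul _ _)

theorem evalOp_add (u v : E →L[ℂ] E) (p q : MvPolynomial (Fin 2) ℂ) :
    evalOp u v (p + q) = evalOp u v p + evalOp u v q :=
  Finsupp.sum_add_index' (fun _ => zero_smul _ _) fun _ _ _ => add_smul _ _ _

theorem evalOp_mul {u v : E →L[ℂ] E} (h : Commute u v) (p q : MvPolynomial (Fin 2) ℂ) :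
    evalOp u v (p * q) = evalOp u v p * evalOp u v q := by
  induction p using MvPolynomial.induction_on' with
  | add p₁ p₂ h₁ h₂ => rw [add_mul, evalOp_add, evalOp_add, h₁, h₂, add_mul]
  | monomial m c =>
    induction q using MvPolynomial.induction_on' with
    | add q₁ q₂ h₁ h₂ => rw [mul_add, evalOp_add, evalOp_add, h₁, h₂, mul_add]
    | monomial n d =>
      rw [monomial_mul, evalOp_monomial, evalOp_monomial, evalOp_monomial, smul_mul_smul_comm,
        Finsupp.add_apply, Finsupp.add_apply, pow_add, pow_add,
        ((h.symm.pow_pow (m 1) (n 0)).mul_mul_mul_comm (u ^ m 0) (v ^ n 1))]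

noncomputable def evalOpAlgHom {u v : E →L[ℂ] E} (h : Commute u v) :
    MvPolynomial (Fin 2) ℂ →ₐ[ℂ] (E →L[ℂ] E) where
  toFun := evalOp u v
  map_one' := by simpa using evalOp_monomial u v 0 1
  map_mul' := evalOp_mul h
  map_zero' := Finsupp.sum_zero_index
  map_add' := evalOp_add u v
  commutes' c := by simpa [Algebra.algebraMap_eq_smul_one] using evalOp_monomial u v 0 c

@[simp]
theorem evalOpAlgHom_apply {u v : E →L[ℂ] E} (h : Commute u v) (q : MvPolynomial (Fin 2) ℂ) :
    evalOpAlgHom h q = evalOp u v q :=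
  rfl

theorem evalOp_X (u v : E →L[ℂ] E) (i : Fin 2) : evalOp u v (X i) = ![u, v] i := by
  rw [X, evalOp_monomial]
  fin_cases i <;> simp

theorem commute_evalOp {u v : E →L[ℂ] E} (h : Commute u v) (p q : MvPolynomial (Fin 2) ℂ) :
    Commute (evalOp u v p) (evalOp u v q) := by
  simpa only [evalOpAlgHom_apply] using (Commute.all p q).map (evalOpAlgHom h)

theorem evalOp_bind₁_pair {u v : E →L[ℂ] E} (h : Commute u v) (p₁ p₂ q : MvPolynomial (Fin 2) ℂ) :
    evalOp u v (bind₁ ![p₁, p₂] q) = evalOp (evalOp u v p₁) (evalOp u v p₂) q := by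
  have key : (evalOpAlgHom h).comp (bind₁ ![p₁, p₂]) = evalOpAlgHom (commute_evalOp h p₁ p₂) := by
    refine algHom_ext fun i => ?_
    fin_cases i <;> simp [evalOp_X]
  exact congrArg (· q) key

theorem tendsto_evalOp {u v : E →L[ℂ] E} {uₙ vₙ : ℕ → E →L[ℂ] E}
    (hu : Tendsto uₙ atTop (𝓝 u)) (hv : Tendsto vₙ atTop (𝓝 v)) (q : MvPolynomial (Fin 2) ℂ) :
    Tendsto (fun n => evalOp (uₙ n) (vₙ n) q) atTop (𝓝 (evalOp u v q)) := by
  simp only [evalOp_eq_sum]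
  exact tendsto_finsetSum _ fun m _ => ((hu.pow _).mul (hv.pow _)).const_smul _

theorem Aop_eq_evalOp {S P : E →L[ℂ] E} (h : Commute S P) (a : ℂ) :
    Aop S P a = evalOp S P (denomPoly (conj a)) := by
  rw [denomPoly, ← map_pow, ← evalOpAlgHom_apply h]
  simp only [map_add, map_sub, map_mul, map_one, algHom_C, evalOpAlgHom_apply, evalOp_X,
    Matrix.cons_val_zero, Matrix.cons_val_one, Algebra.algebraMap_eq_smul_one, smul_mul_assoc,
    one_mul]
  rfl

theorem Stau_eq {S P : E →L[ℂ] E} (h : Commute S P) (a β : ℂ) :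
    Stau S P a β = evalOp S P (sTauNum a β) * Ring.inverse (Aop S P a) := by
  rw [sTauNum, ← evalOpAlgHom_apply h]
  simp only [Stau, map_sub, map_mul, algHom_C, evalOpAlgHom_apply, evalOp_X, Matrix.cons_val_zero,
    Matrix.cons_val_one, Algebra.algebraMap_eq_smul_one, smul_mul_assoc, one_mul, mul_smul]

theorem Ptau_eq {S P : E →L[ℂ] E} (h : Commute S P) (a β : ℂ) :
    Ptau S P a β = evalOp S P (pTauNum a β) * Ring.inverse (Aop S P a) := by
  rw [pTauNum, ← evalOpAlgHom_apply h]
  simp only [map_add, map_sub, map_mul, algHom_C, evalOpAlgHom_apply, evalOp_X,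
    Matrix.cons_val_zero, Matrix.cons_val_one, Algebra.algebraMap_eq_smul_one, smul_mul_assoc,
    one_mul]
  rfl

theorem IsGammaContraction.tendsto_evalOp_neumannPoly {S P : E →L[ℂ] E}
    (hSP : IsGammaContraction S P) {a : ℂ} (ha : ‖a‖ < 1) (hA : IsUnit (Aop S P a)) :
    Tendsto (fun N => evalOp S P (neumannPoly (conj a) N)) atTop
      (𝓝 (Ring.inverse (Aop S P a))) := by
  set Ai := Ring.inverse (Aop S P a)
  have herr (N : ℕ) : evalOp S P (neumannPoly (conj a) N) - Ai =
      -(Ai * evalOp S P (neumannRem (conj a) N)) := by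
    have h := congrArg (Ai * evalOp S P ·) (denomPoly_mul_neumannPoly (conj a) N)
    simp only [evalOp_mul hSP.1, ← Aop_eq_evalOp hSP.1, ← mul_assoc] at h
    rw [Ring.inverse_mul_cancel _ hA, one_mul] at h
    rw [h, ← evalOpAlgHom_apply hSP.1, map_sub, map_one, evalOpAlgHom_apply]
    noncomm_ring
  have hrem (N : ℕ) : ‖evalOp S P (neumannRem (conj a) N)‖ ≤ neumannBound ‖a‖ N :=
    (hSP.2 _).trans (gammaSupNorm_le fun z₁ z₂ h₁ h₂ => by
      simpa only [Complex.norm_conj] using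
        norm_eval_neumannRem_le ((Complex.norm_conj a).trans_le ha.le) h₁ h₂ N)
  rw [tendsto_iff_norm_sub_tendsto_zero]
  refine squeeze_zero (fun _ => norm_nonneg _) (fun N => ?_)
    (by simpa using (tendsto_neumannBound (norm_nonneg a) ha).const_mul ‖Ai‖)
  rw [herr, norm_neg]
  exact (norm_mul_le _ _).trans (mul_le_mul_of_nonneg_left (hrem N) (norm_nonneg _))

theorem IsGammaContraction.tendsto_evalOp_mul_neumannPoly {S P : E →L[ℂ] E}
    (hSP : IsGammaContraction S P) {a : ℂ} (ha : ‖a‖ < 1) (hA : IsUnit (Aop S P a))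
    (p : MvPolynomial (Fin 2) ℂ) :
    Tendsto (fun N => evalOp S P (p * neumannPoly (conj a) N)) atTop
      (𝓝 (evalOp S P p * Ring.inverse (Aop S P a))) := by
  simp only [evalOp_mul hSP.1]
  exact tendsto_const_nhds.mul (hSP.tendsto_evalOp_neumannPoly ha hA)

end

/-- the image of a `Γ`-contraction under an automorphism of the symmetrized
bidisc induced by the Möbius map `m(z) = β(z-a)/(1 - conj(a) z)` is again a `Γ`-contraction
(in particular, `S_τ` and `P_τ` commute). -/
theorem stmt0 (S P : H →L[ℂ] H) (hSP : IsGammaContraction S P)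
    (a β : ℂ) (ha : ‖a‖ < 1) (hβ : ‖β‖ = 1)
    (hA : IsUnit (Aop S P a)) :
    IsGammaContraction (Stau S P a β) (Ptau S P a β) := by
  have hu := Stau_eq hSP.1 a β ▸ hSP.tendsto_evalOp_mul_neumannPoly ha hA (sTauNum a β)
  have hv := Ptau_eq hSP.1 a β ▸ hSP.tendsto_evalOp_mul_neumannPoly ha hA (pTauNum a β)
  refine ⟨Commute.of_tendsto hu hv fun N => commute_evalOp hSP.1 _ _, fun q => ?_⟩
  refine le_of_forall_pos_le_add fun ε hε => le_of_tendsto (tendsto_evalOp hu hv q).norm ?_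
  filter_upwards [eventually_gammaSupNorm_bind₁_le q ha hβ hε] with N hN
  rw [← evalOp_bind₁_pair hSP.1]
  exact (hSP.2 _).trans hN
end

section
/- Let S and P be commuting bounded linear operators on a complex Hilbert space H with ‖P‖ ≤ 1, and let F be a bounded operator on H with S − S*P = D_P F D_P. Let a ∈ ℂ with |a| < 1 and β ∈ ℂ with |β| = 1, suppose A := I − conj(a)·S + conj(a)²·P is invertible, and set P_τ = β²(P − aS + a²·I)A⁻¹. Then A*(I − P_τ* P_τ)A = (1−|a|²)·D_P((1+|a|²)I − conj(a)·F − a·F*)D_P. -/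
open ContinuousLinearMap Filter ComplexConjugate

variable {H : Type*} [NormedAddCommGroup H] [InnerProductSpace ℂ H] [CompleteSpace H]
variable {H₁ : Type*} [NormedAddCommGroup H₁] [InnerProductSpace ℂ H₁] [CompleteSpace H₁]

/-!
`P_τ A = β² B` with `B = P - a S + a²`, so for `|β| = 1` the left-hand side is `A* A - B* B`.
Expanding, `A* A - B* B = (1 - |a|²)((1 + |a|²)(1 - P* P) - ā (S - S* P) - a (S* - P* S))`, and the
fundamental equation `S - S* P = D_P F D_P`, its adjoint and `D_P² = 1 - P* P` turn this into the
right-hand side.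
-/

lemma one_sub_star_mul_self_nonneg {A : Type*} [CStarAlgebra A] [PartialOrder A]
    [StarOrderedRing A] {x : A} (hx : ‖x‖ ≤ 1) : 0 ≤ 1 - star x * x := by
  rw [sub_nonneg, ← CStarAlgebra.norm_le_one_iff_of_nonneg _ (star_mul_self_nonneg x),
    CStarRing.norm_star_mul_self]
  exact mul_le_one₀ hx (norm_nonneg x) hx

lemma defectOp_mul_self {P : H →L[ℂ] H} (hP : ‖P‖ ≤ 1) :
    defectOp P * defectOp P = 1 - star P * P :=
  CFC.sqrt_mul_sqrt_self _ (one_sub_star_mul_self_nonneg hP)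

lemma star_defectOp (P : H →L[ℂ] H) : star (defectOp P) = defectOp P :=
  (IsSelfAdjoint.of_nonneg (CFC.sqrt_nonneg _)).star_eq

section StarAlgebra

variable {R : Type*} [Ring R] [StarRing R]

lemma star_mul_one_sub_star_mul_self_mul (A T : R) :
    star A * (1 - star T * T) * A = star A * A - star (T * A) * (T * A) := by
  rw [star_mul]; noncomm_ring

variable [Algebra ℂ R]

lemma mul_smul_sub_smul_sub_smul_star_mul {D F S P : R} (hD : star D = D)
    (hF : S - star S * P = D * F * D) (c a : ℂ) :
    D * (c • 1 - conj a • F - a • star F) * D =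
      c • (D * D) - conj a • (S - star S * P) - a • (star S - star P * S) := by
  have hF' : star S - star P * S = D * star F * D := by
    simpa [star_mul, hD, mul_assoc] using congrArg star hF
  rw [hF, hF']
  simp only [mul_sub, sub_mul, mul_smul_comm, smul_mul_assoc, mul_one]

variable [StarModule ℂ R]

lemma star_mul_self_sub_star_mul_self (S P : R) (a : ℂ) :
    star (1 - conj a • S + conj a ^ 2 • P) * (1 - conj a • S + conj a ^ 2 • P)
        - star (P - a • S + a ^ 2 • 1) * (P - a • S + a ^ 2 • 1) =
      ((1 - ‖a‖ ^ 2 : ℝ) : ℂ) • (((1 + ‖a‖ ^ 2 : ℝ) : ℂ) • (1 - star P * P)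
        - conj a • (S - star S * P) - a • (star S - star P * S)) := by
  have hnorm : ((‖a‖ : ℝ) : ℂ) ^ 2 = conj a * a := by
    rw [mul_comm, Complex.mul_conj, Complex.normSq_eq_norm_sq]; push_cast; rfl
  simp only [star_add, star_sub, star_smul, star_pow, star_one, RCLike.star_def,
    Complex.conj_conj]
  push_cast
  rw [hnorm]
  simp only [mul_add, add_mul, mul_sub, sub_mul, mul_smul_comm, smul_mul_assoc, smul_smul,
    mul_one, one_mul, smul_sub, smul_add]
  module

end StarAlgebra

theorem stmt3_general (S P : H →L[ℂ] H) (hP : ‖P‖ ≤ 1)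
    (F : H →L[ℂ] H)
    (hF : S - adjoint S * P = defectOp P * F * defectOp P)
    (a β : ℂ) (hβ : ‖β‖ = 1)
    (hA : IsUnit (Aop S P a)) :
    adjoint (Aop S P a) * (1 - adjoint (Ptau S P a β) * Ptau S P a β) * Aop S P a =
      ((1 - ‖a‖ ^ 2 : ℝ) : ℂ) •
        (defectOp P * (((1 + ‖a‖ ^ 2 : ℝ) : ℂ) • (1 : H →L[ℂ] H) - conj a • F - a • adjoint F) *
          defectOp P) := by
  simp only [← star_eq_adjoint] at hF ⊢
  have hPtau : Ptau S P a β * Aop S P a = β ^ 2 • (P - a • S + a ^ 2 • 1) := by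
    rw [Ptau, mul_assoc, Ring.inverse_mul_cancel _ hA, mul_one]
  have hβ2 : star (β ^ 2) * β ^ 2 = 1 := by
    rw [RCLike.star_def, mul_comm, Complex.mul_conj, Complex.normSq_eq_norm_sq, norm_pow, hβ]
    norm_num
  rw [star_mul_one_sub_star_mul_self_mul, hPtau, star_smul, smul_mul_smul_comm, hβ2, one_smul,
    mul_smul_sub_smul_sub_smul_star_mul (star_defectOp P) hF, defectOp_mul_self hP, Aop]
  exact star_mul_self_sub_star_mul_self S P a

/-- the defect identity `A*(I - P_τ*P_τ)A = (1-|a|²) D_P((1+|a|²)I - conj(a)F - aF*)D_P`. -/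
theorem stmt3 (S P : H →L[ℂ] H) (hc : Commute S P) (hP : ‖P‖ ≤ 1)
    (F : H →L[ℂ] H)
    (hF : S - adjoint S * P = defectOp P * F * defectOp P)
    (a β : ℂ) (ha : ‖a‖ < 1) (hβ : ‖β‖ = 1)
    (hA : IsUnit (Aop S P a)) :
    adjoint (Aop S P a) * (1 - adjoint (Ptau S P a β) * Ptau S P a β) * Aop S P a =
      ((1 - ‖a‖ ^ 2 : ℝ) : ℂ) •
        (defectOp P * (((1 + ‖a‖ ^ 2 : ℝ) : ℂ) • (1 : H →L[ℂ] H) - conj a • F - a • adjoint F) *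
          defectOp P) :=
  stmt3_general S P hP F hF a β hβ hA
end

section
/- Let S and P be commuting bounded linear operators on a complex Hilbert space H with ‖P‖ ≤ 1. Let F and F_* be bounded operators on H satisfying S − S*P = D_P F D_P with F = Q_P F Q_P, and S* − SP* = D_{P*} F_* D_{P*} with F_* = Q_{P*} F_* Q_{P*}. Then P F D_P = F_*^* P D_P as operators on H; equivalently, PF and F_*^*P agree on the defect space 𝒟_P. -/
open ContinuousLinearMap Filter ComplexConjugate

variable {H : Type*} [NormedAddCommGroup H] [InnerProductSpace ℂ H] [CompleteSpace H]
variable {H₁ : Type*} [NormedAddCommGroup H₁] [InnerProductSpace ℂ H₁] [CompleteSpace H₁]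

/-! If `‖P‖ ≤ 1` then `P (I - P*P) = (I - PP*) P` passes through the continuous functional calculus
to `P D_P = D_{P*} P`. With it and the two defining equations,
`D_{P*} (P F D_P - F_*^* P D_P) = P (S - S*P) - (S - PS*) P = PS - SP = 0`.
Both `P F D_P` and `F_*^* P D_P` take values in `𝒟_{P*}`: `P` maps `𝒟_P = closure (range D_P)` into
`closure (range D_{P*})`, and `F_*^* = Q_{P*} F_*^* Q_{P*}`. Finally `𝒟_{P*}` is orthogonal to
`ker D_{P*}`, since `D_{P*}` is self-adjoint. -/

open Topology Set

open Polynomial in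
theorem SemiconjBy.aeval {R A : Type*} [CommSemiring R] [Semiring A] [Algebra R A] {x a b : A}
    (h : SemiconjBy x a b) (p : R[X]) : SemiconjBy x (aeval a p) (aeval b p) := by
  induction p using Polynomial.induction_on' with
  | add p q hp hq => simpa only [map_add] using hp.add_right hq
  | monomial n c =>
    simpa only [aeval_monomial] using
      SemiconjBy.mul_right (Algebra.commute_algebraMap_right c x) (h.pow_right n)

open Polynomial in
theorem SemiconjBy.cfc_real {A : Type*} [CStarAlgebra A] {x a b : A} (h : SemiconjBy x a b)
    (ha : IsSelfAdjoint a) (hb : IsSelfAdjoint b) {f : ℝ → ℝ} (hf : Continuous f) :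
    SemiconjBy x (cfc f a) (cfc f b) := by
  obtain ⟨lo, hi, hs⟩ : ∃ lo hi : ℝ, spectrum ℝ a ∪ spectrum ℝ b ⊆ Icc lo hi :=
    ⟨_, _, ((ContinuousFunctionalCalculus.isCompact_spectrum a).union
      (ContinuousFunctionalCalculus.isCompact_spectrum b)).isBounded.subset_Icc_sInf_sSup⟩
  -- Weierstrass: polynomials `p n` converging to `f` uniformly on an interval holding both spectra.
  choose p hp using fun n : ℕ => exists_polynomial_near_of_continuousOn lo hi f hf.continuousOn
    (1 / (n + 1)) Nat.one_div_pos_of_nat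
  have hp_unif : TendstoUniformlyOn (fun n t => (p n).eval t) f atTop (Icc lo hi) := by
    refine Metric.tendstoUniformlyOn_iff.2 fun ε hε => ?_
    obtain ⟨N, hN⟩ := exists_nat_one_div_lt hε
    filter_upwards [eventually_ge_atTop N] with n hn t ht
    rw [Real.dist_eq, abs_sub_comm]
    calc |(p n).eval t - f t| < 1 / (n + 1) := hp n t ht
      _ ≤ 1 / (N + 1) := Nat.one_div_le_one_div hn
      _ < ε := hN
  have hlim : ∀ c : A, IsSelfAdjoint c → spectrum ℝ c ⊆ Icc lo hi →
      Tendsto (fun n => Polynomial.aeval c (p n)) atTop (𝓝 (cfc f c)) := fun c hc hcs => by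
    simpa only [cfc_polynomial _ c hc] using tendsto_cfc_fun (hp_unif.mono hcs)
      (Eventually.of_forall fun n => (p n).continuousOn)
  exact tendsto_nhds_unique (((hlim a ha (subset_union_left.trans hs)).const_mul x).congr
    fun n => (h.aeval (p n)).eq) ((hlim b hb (subset_union_right.trans hs)).mul_const x)

theorem one_sub_adjoint_mul_self_nonneg {P : H →L[ℂ] H} (hP : ‖P‖ ≤ 1) :
    0 ≤ 1 - adjoint P * P := by
  have hPP : ‖adjoint P * P‖ ≤ 1 := by
    rw [← star_eq_adjoint, CStarRing.norm_star_mul_self]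
    exact mul_le_one₀ hP (norm_nonneg P) hP
  rw [sub_nonneg, ← star_eq_adjoint]
  exact (CStarAlgebra.mem_Icc_iff_norm_le_one.mpr ⟨star_mul_self_nonneg P, hPP⟩).2

theorem mul_defectOp {P : H →L[ℂ] H} (hP : ‖P‖ ≤ 1) :
    P * defectOp P = defectOp (adjoint P) * P := by
  have hP' : ‖adjoint P‖ ≤ 1 := by rwa [← star_eq_adjoint, norm_star]
  have hsemiconj : SemiconjBy P (1 - adjoint P * P) (1 - adjoint (adjoint P) * adjoint P) := by
    rw [adjoint_adjoint, SemiconjBy]; noncomm_ring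
  rw [defectOp, defectOp, CFC.sqrt_eq_real_sqrt _ (one_sub_adjoint_mul_self_nonneg hP),
    CFC.sqrt_eq_real_sqrt _ (one_sub_adjoint_mul_self_nonneg hP'), cfcₙ_eq_cfc, cfcₙ_eq_cfc]
  exact hsemiconj.cfc_real (one_sub_adjoint_mul_self_nonneg hP).isSelfAdjoint
    (one_sub_adjoint_mul_self_nonneg hP').isSelfAdjoint Real.continuous_sqrt

theorem isSelfAdjoint_defectOp (P : H →L[ℂ] H) : IsSelfAdjoint (defectOp P) :=
  (CFC.sqrt_nonneg _).isSelfAdjoint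

instance (P : H →L[ℂ] H) : CompleteSpace (defectSpace P) :=
  (Submodule.isClosed_topologicalClosure _).completeSpace_coe

theorem defectProj_eq_starProjection (P : H →L[ℂ] H) :
    defectProj P = (defectSpace P).starProjection :=
  rfl

theorem apply_mem_defectSpace_of_eq_defectProj_mul {P X : H →L[ℂ] H}
    (hX : X = defectProj P * X * defectProj P) (x : H) : X x ∈ defectSpace P := by
  rw [hX, defectProj_eq_starProjection]
  exact (defectSpace P).starProjection_apply_mem _

theorem adjoint_eq_defectProj_mul {P X : H →L[ℂ] H} (hX : X = defectProj P * X * defectProj P) :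
    adjoint X = defectProj P * adjoint X * defectProj P := by
  have hQ := (isSelfAdjoint_starProjection (defectSpace P)).adjoint_eq
  rw [← defectProj_eq_starProjection] at hQ
  conv_lhs => rw [hX]
  simp only [adjoint_comp, hQ, mul_def, comp_assoc]

theorem apply_mem_defectSpace_adjoint {P : H →L[ℂ] H} (hP : ‖P‖ ≤ 1) {y : H}
    (hy : y ∈ defectSpace P) : P y ∈ defectSpace (adjoint P) := by
  refine map_mem_closure P.continuous hy ?_
  rintro _ ⟨z, rfl⟩
  exact ⟨P z, by simpa using congr($(mul_defectOp hP) z).symm⟩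

theorem eq_zero_of_mem_defectSpace {P : H →L[ℂ] H} {u : H} (hu : u ∈ defectSpace P)
    (hDu : defectOp P u = 0) : u = 0 := by
  have hperp : u ∈ (defectSpace P)ᗮ := by
    rw [defectSpace, Submodule.orthogonal_closure, orthogonal_range,
      (isSelfAdjoint_defectOp P).adjoint_eq]
    exact hDu
  exact (Submodule.mem_bot ℂ).1 <| (defectSpace P).inf_orthogonal_eq_bot ▸ ⟨hu, hperp⟩

theorem defectOp_adjoint_mul_sub_eq_zero {S P F Fs : H →L[ℂ] H} (hc : Commute S P)
    (hP : ‖P‖ ≤ 1) (hF : S - adjoint S * P = defectOp P * F * defectOp P)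
    (hFs : adjoint S - S * adjoint P = defectOp (adjoint P) * Fs * defectOp (adjoint P)) :
    defectOp (adjoint P) * (P * F * defectOp P - adjoint Fs * P * defectOp P) = 0 := by
  set D := defectOp P
  set Ds := defectOp (adjoint P)
  have hPD : P * D = Ds * P := mul_defectOp hP
  have hDs : adjoint Ds = Ds := (isSelfAdjoint_defectOp (adjoint P)).adjoint_eq
  have hFs' : S - P * adjoint S = Ds * adjoint Fs * Ds := by
    have h := congr(star $hFs)
    simp only [star_sub, star_mul, star_eq_adjoint, adjoint_adjoint, hDs] at h
    rw [h, mul_assoc]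
  have hPFD : Ds * (P * F * D) = P * (D * F * D) := by
    simp only [← mul_assoc, ← hPD]
  have hFsPD : Ds * (adjoint Fs * P * D) = Ds * adjoint Fs * Ds * P := by
    simp only [mul_assoc, hPD]
  rw [mul_sub, hPFD, hFsPD, ← hF, ← hFs', mul_sub, sub_mul, hc.eq]
  noncomm_ring

/-- if `F` and `F_*` are the fundamental operators of `(S,P)` and `(S*,P*)`,
then `PF = F_*^* P` on the defect space `𝒟_P`. -/
theorem stmt5 (S P : H →L[ℂ] H) (hc : Commute S P) (hP : ‖P‖ ≤ 1)
    (F Fs : H →L[ℂ] H)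
    (hF : S - adjoint S * P = defectOp P * F * defectOp P)
    (hFQ : F = defectProj P * F * defectProj P)
    (hFs : adjoint S - S * adjoint P = defectOp (adjoint P) * Fs * defectOp (adjoint P))
    (hFsQ : Fs = defectProj (adjoint P) * Fs * defectProj (adjoint P)) :
    P * F * defectOp P = adjoint Fs * P * defectOp P := by
  ext x
  rw [← sub_eq_zero, ← sub_apply]
  apply eq_zero_of_mem_defectSpace (P := adjoint P)
  · exact Submodule.sub_mem _
      (apply_mem_defectSpace_adjoint hP (apply_mem_defectSpace_of_eq_defectProj_mul hFQ _))
      (apply_mem_defectSpace_of_eq_defectProj_mul (adjoint_eq_defectProj_mul hFsQ) _)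
  · exact congr($(defectOp_adjoint_mul_sub_eq_zero hc hP hF hFs) x)
end
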